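/- Let a > 0 be real. For b ∈ ℂ with |b| < 1 and |a·b| < 1, let s and r be the principal square roots of 1 - b² and 1 - a²b² respectively, set x₋ := b/s - a·b/r, y₊ := 1/s + 1/r, and M_n'(b) := (i/2)·[[x₋ - 2i, y₊], [-y₊, -x₋ - 2i]]. Then det M_n'(b)/b² tends to -(1+a)²/4 as b → 0 with b ≠ 0. In particular, since -(1+a)²/4 ≠ 0 and det M_n'(0) = 0, the analytic function b ↦ det M_n'(b) has a zero of order exactly 2 at b = 0. -/

import Mathlib

open Complex Filter

/-- The principal square root of a complex number (for `Re z > 0` this is the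
unique square root with positive real part). -/
noncomputable def psqrt (z : ℂ) : ℂ := z ^ ((1 : ℂ) / 2)

/-- The matrix `M_n'(b) = (i/2)·[[x₋ - 2i, y₊],[-y₊, -x₋ - 2i]]` with
`x₋ = b/√(1-b²) - ab/√(1-a²b²)` and `y₊ = 1/√(1-b²) + 1/√(1-a²b²)`,
using the principal square roots. -/
noncomputable def Mnp (a : ℝ) (b : ℂ) : Matrix (Fin 2) (Fin 2) ℂ :=
  (Complex.I / 2) •
    !![(b / psqrt (1 - b ^ 2) - (a : ℂ) * b / psqrt (1 - (a : ℂ) ^ 2 * b ^ 2)) - 2 * Complex.I,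
       1 / psqrt (1 - b ^ 2) + 1 / psqrt (1 - (a : ℂ) ^ 2 * b ^ 2);
       -(1 / psqrt (1 - b ^ 2) + 1 / psqrt (1 - (a : ℂ) ^ 2 * b ^ 2)),
       -(b / psqrt (1 - b ^ 2) - (a : ℂ) * b / psqrt (1 - (a : ℂ) ^ 2 * b ^ 2)) - 2 * Complex.I]

/-!
With `s = √(1-b²)` and `r = √(1-a²b²)`, the determinant is
`-¼((1/s + 1/r)² - (b/s - ab/r)² - 4)`, which equals `-(1 + ab² - sr)/(2sr)` because
`s² = 1 - b²` and `r² = 1 - a²b²`. Since `(1 + ab²)² - s²r² = (1+a)²b²`, this is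
`-b²(1+a)²/(2sr(1 + ab² + sr))`, and the cofactor of `b²` tends to `-(1+a)²/4` as `s, r → 1`.
-/

open Topology

lemma psqrt_sq (z : ℂ) : psqrt z ^ 2 = z := by
  rw [psqrt, one_div, ← Nat.cast_ofNat, cpow_nat_inv_pow _ two_ne_zero]

lemma tendsto_psqrt_one_sub_mul_sq (c : ℂ) :
    Tendsto (fun b : ℂ => psqrt (1 - c * b ^ 2)) (𝓝 0) (𝓝 1) := by
  have h : ContinuousAt (fun b : ℂ => psqrt (1 - c * b ^ 2)) 0 :=
    (continuousAt_cpow_const (by simp)).comp (by fun_prop)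
  simpa [psqrt] using h.tendsto

lemma det_Mnp_eq (a : ℝ) (b : ℂ) (hs : psqrt (1 - b ^ 2) ≠ 0)
    (hr : psqrt (1 - (a : ℂ) ^ 2 * b ^ 2) ≠ 0)
    (hsr : 1 + a * b ^ 2 + psqrt (1 - b ^ 2) * psqrt (1 - (a : ℂ) ^ 2 * b ^ 2) ≠ 0) :
    (Mnp a b).det = -(b ^ 2 * (1 + (a : ℂ)) ^ 2 /
      (2 * psqrt (1 - b ^ 2) * psqrt (1 - (a : ℂ) ^ 2 * b ^ 2) *
        (1 + a * b ^ 2 + psqrt (1 - b ^ 2) * psqrt (1 - (a : ℂ) ^ 2 * b ^ 2)))) := by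
  rw [Mnp, Matrix.det_smul, Matrix.det_fin_two_of, Fintype.card_fin]
  have hs2 := psqrt_sq (1 - b ^ 2)
  have hr2 := psqrt_sq (1 - (a : ℂ) ^ 2 * b ^ 2)
  set s := psqrt (1 - b ^ 2)
  set r := psqrt (1 - (a : ℂ) ^ 2 * b ^ 2)
  have hF : 1 + b ^ 2 * a + s * r ≠ 0 := by convert hsr using 1; ring
  field_simp
  linear_combination (1 + a * b ^ 2 + s * r) *
      (4 * s ^ 2 * r ^ 2 * (I ^ 2 - 1) + (r + s) ^ 2 - (b * (r - s * a)) ^ 2) * I_sq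
    + (2 * r ^ 3 * s + (1 + a * b ^ 2 + s * r) * r ^ 2) * hs2
    + (2 * r * s * (1 - b ^ 2) + (1 + a * b ^ 2 + s * r) * s ^ 2) * hr2

/-- `det M_n'(b)/b² → -(1+a)²/4` as `b → 0`, `b ≠ 0`; in particular,
since `-(1+a)²/4 ≠ 0` and `det M_n'(0) = 0`, the function `b ↦ det M_n'(b)` has a
zero of order exactly 2 at `b = 0`. -/
theorem statement18 (a : ℝ) (ha : 0 < a) :
    Tendsto (fun b : ℂ => (Mnp a b).det / b ^ 2) (nhdsWithin 0 {(0 : ℂ)}ᶜ)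
      (nhds (-((1 + (a : ℂ)) ^ 2 / 4)))
    ∧ (Mnp a 0).det = 0
    ∧ -((1 + (a : ℂ)) ^ 2 / 4) ≠ 0 := by
  set S : ℂ → ℂ := fun b => psqrt (1 - b ^ 2)
  set R : ℂ → ℂ := fun b => psqrt (1 - (a : ℂ) ^ 2 * b ^ 2)
  have hS : Tendsto S (𝓝 0) (𝓝 1) := by simpa using tendsto_psqrt_one_sub_mul_sq 1
  have hR : Tendsto R (𝓝 0) (𝓝 1) := tendsto_psqrt_one_sub_mul_sq _
  have hF : Tendsto (fun b => 1 + a * b ^ 2 + S b * R b) (𝓝 0) (𝓝 2) := by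
    have h : Tendsto (fun b : ℂ => 1 + a * b ^ 2) (𝓝 0) (𝓝 1) := by
      simpa using (by fun_prop : Continuous fun b : ℂ => 1 + a * b ^ 2).tendsto 0
    simpa [one_add_one_eq_two] using h.add (hS.mul hR)
  have hfactor : ∀ᶠ b in 𝓝 0, (Mnp a b).det =
      -(b ^ 2 * (1 + (a : ℂ)) ^ 2 / (2 * S b * R b * (1 + a * b ^ 2 + S b * R b))) := by
    filter_upwards [hS.eventually_ne one_ne_zero, hR.eventually_ne one_ne_zero,
      hF.eventually_ne two_ne_zero] with b hs hr hsr
    exact det_Mnp_eq a b hs hr hsr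
  have hlim : Tendsto
      (fun b => -((1 + (a : ℂ)) ^ 2 / (2 * S b * R b * (1 + a * b ^ 2 + S b * R b))))
      (𝓝[≠] 0) (𝓝 (-((1 + (a : ℂ)) ^ 2 / 4))) := by
    refine (Tendsto.neg (tendsto_const_nhds.div ?_ (by norm_num))).mono_left nhdsWithin_le_nhds
    convert ((hS.const_mul 2).mul hR).mul hF using 2
    norm_num
  refine ⟨hlim.congr' ?_, by simpa using hfactor.self_of_nhds, ?_⟩
  · filter_upwards [nhdsWithin_le_nhds hfactor, self_mem_nhdsWithin] with b hb hb0
    rw [hb, mul_div_assoc, neg_div, mul_div_cancel_left₀ _ (pow_ne_zero 2 hb0)]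
  · have : (1 + (a : ℂ)) ≠ 0 := by exact_mod_cast (by linarith : (1 + a) ≠ 0)
    simpa using this
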